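/- Let (M,g) be a complete Riemannian manifold with a pole x₀ and distance function r. Suppose there exist positive functions h₁(r), h₂(r) with h₁(r)[g − dr⊗dr] ≤ Hess(r) ≤ h₂(r)[g − dr⊗dr] and r·h₂(r) ≥ 1. Then the eigenvalues λ₁ ≤ … ≤ λ_m of Hess(r²) satisfy Σᵢλᵢ − p·λ_m ≥ 2(1 + (m−1)·r·h₁(r) − p·r·h₂(r)). -/

import Mathlib

/-!
Write `c = ⟪e, ∂r⟫` for a unit eigenvector `e` of `Hess(r²) = 2 dr⊗dr + 2r Hess(r)` with
eigenvalue `λ`. Since `Hess(r)` kills `∂r`, its quadratic form at `e` only sees the part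
`e - c ∂r` orthogonal to `∂r`, of squared length `1 - c²`; hence
`2c² + 2r h₁ (1 - c²) ≤ λ ≤ 2c² + 2r h₂ (1 - c²) ≤ 2r h₂`, the last step because `r h₂ ≥ 1`.
Summing the lower bounds over an orthonormal eigenbasis, where `Σ c² = |∂r|² = 1`, gives
`Σ λᵢ ≥ 2 + 2 (dim E - 1) r h₁`, and the upper bound applies to the largest eigenvalue.
-/

open RealInnerProductSpace

section

variable {E : Type*} [NormedAddCommGroup E] [InnerProductSpace ℝ E] {u : E}

theorem inner_sub_inner_smul_self_left (hu : ‖u‖ = 1) (x : E) : ⟪x - ⟪x, u⟫ • u, u⟫ = 0 := by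
  rw [inner_sub_left, real_inner_smul_left, real_inner_self_eq_norm_sq, hu]
  ring

theorem norm_sub_inner_smul_sq (hu : ‖u‖ = 1) (x : E) :
    ‖x - ⟪x, u⟫ • u‖ ^ 2 = ‖x‖ ^ 2 - ⟪x, u⟫ ^ 2 := by
  rw [norm_sub_sq_real, real_inner_smul_right, norm_smul, hu, mul_one, Real.norm_eq_abs, sq_abs]
  ring

variable {A : E →ₗ[ℝ] E}

theorem inner_map_sub_smul_self (hA : ∀ v w, ⟪A v, w⟫ = ⟪v, A w⟫) (hAu : A u = 0)
    (x : E) (t : ℝ) : ⟪A (x - t • u), x - t • u⟫ = ⟪A x, x⟫ := by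
  have hAxu : ⟪A x, u⟫ = 0 := by rw [hA, hAu, inner_zero_right]
  simp only [map_sub, map_smul, hAu, smul_zero, sub_zero, inner_sub_right,
    real_inner_smul_right, hAxu, mul_zero]

theorem mul_norm_sq_sub_inner_sq_le_inner_map (hu : ‖u‖ = 1)
    (hA : ∀ v w, ⟪A v, w⟫ = ⟪v, A w⟫) (hAu : A u = 0) {h : ℝ}
    (hlb : ∀ v, ⟪v, u⟫ = 0 → h * ‖v‖ ^ 2 ≤ ⟪A v, v⟫) (x : E) :
    h * (‖x‖ ^ 2 - ⟪x, u⟫ ^ 2) ≤ ⟪A x, x⟫ := by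
  simpa only [norm_sub_inner_smul_sq hu, inner_map_sub_smul_self hA hAu] using
    hlb _ (inner_sub_inner_smul_self_left hu x)

theorem inner_map_le_mul_norm_sq_sub_inner_sq (hu : ‖u‖ = 1)
    (hA : ∀ v w, ⟪A v, w⟫ = ⟪v, A w⟫) (hAu : A u = 0) {h : ℝ}
    (hub : ∀ v, ⟪v, u⟫ = 0 → ⟪A v, v⟫ ≤ h * ‖v‖ ^ 2) (x : E) :
    ⟪A x, x⟫ ≤ h * (‖x‖ ^ 2 - ⟪x, u⟫ ^ 2) := by
  simpa only [norm_sub_inner_smul_sq hu, inner_map_sub_smul_self hA hAu] using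
    hub _ (inner_sub_inner_smul_self_left hu x)

variable {r μ : ℝ} {e : E}

theorem eigenvalue_eq_of_radial_add_smul_map (he : ‖e‖ = 1)
    (heig : (2 * ⟪e, u⟫) • u + (2 * r) • A e = μ • e) :
    μ = 2 * ⟪e, u⟫ ^ 2 + 2 * r * ⟪A e, e⟫ := by
  have h := congrArg (⟪·, e⟫) heig
  simp only [inner_add_left, real_inner_smul_left, real_inner_self_eq_norm_sq, he,
    real_inner_comm e u, one_pow] at h
  linear_combination -h

theorem le_eigenvalue_of_radial_add_smul_map (hu : ‖u‖ = 1)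
    (hA : ∀ v w, ⟪A v, w⟫ = ⟪v, A w⟫) (hAu : A u = 0) (hr : 0 ≤ r) {h : ℝ}
    (hlb : ∀ v, ⟪v, u⟫ = 0 → h * ‖v‖ ^ 2 ≤ ⟪A v, v⟫) (he : ‖e‖ = 1)
    (heig : (2 * ⟪e, u⟫) • u + (2 * r) • A e = μ • e) :
    2 * (r * h) + 2 * (1 - r * h) * ⟪e, u⟫ ^ 2 ≤ μ := by
  have hq := mul_norm_sq_sub_inner_sq_le_inner_map hu hA hAu hlb e
  rw [he, one_pow] at hq
  rw [eigenvalue_eq_of_radial_add_smul_map he heig]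
  nlinarith

theorem eigenvalue_le_of_radial_add_smul_map (hu : ‖u‖ = 1)
    (hA : ∀ v w, ⟪A v, w⟫ = ⟪v, A w⟫) (hAu : A u = 0) (hr : 0 ≤ r) {h : ℝ}
    (hrh : 1 ≤ r * h) (hub : ∀ v, ⟪v, u⟫ = 0 → ⟪A v, v⟫ ≤ h * ‖v‖ ^ 2) (he : ‖e‖ = 1)
    (heig : (2 * ⟪e, u⟫) • u + (2 * r) • A e = μ • e) :
    μ ≤ 2 * (r * h) := by
  have hq := inner_map_le_mul_norm_sq_sub_inner_sq hu hA hAu hub e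
  rw [he, one_pow] at hq
  rw [eigenvalue_eq_of_radial_add_smul_map he heig]
  nlinarith [sq_nonneg ⟪e, u⟫]

end

theorem hessian_eigenvalue_estimate_general {E : Type*} [NormedAddCommGroup E]
    [InnerProductSpace ℝ E] {m : ℕ}
    (p r h₁ h₂ : ℝ) (hp : 1 ≤ p) (hr : 0 < r)
    (hrh₂ : 1 ≤ r * h₂)
    (ρv : E) (hρv : ‖ρv‖ = 1)
    (A : E →ₗ[ℝ] E) (hAsym : ∀ v w, ⟪A v, w⟫ = ⟪v, A w⟫) (hAρ : A ρv = 0)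
    (hA_lb : ∀ v, ⟪v, ρv⟫ = 0 → h₁ * ‖v‖ ^ 2 ≤ ⟪A v, v⟫)
    (hA_ub : ∀ v, ⟪v, ρv⟫ = 0 → ⟪A v, v⟫ ≤ h₂ * ‖v‖ ^ 2)
    (lam : Fin (m + 1) → ℝ)
    (b : OrthonormalBasis (Fin (m + 1)) ℝ E)
    (hb : ∀ i, (2 * ⟪b i, ρv⟫) • ρv + (2 * r) • A (b i) = lam i • b i) :
    2 * (1 + (m : ℝ) * (r * h₁) - p * (r * h₂)) ≤ (∑ i, lam i) - p * lam (Fin.last m) := by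
  have hparseval : ∑ i, ⟪b i, ρv⟫ ^ 2 = 1 := by rw [b.sum_sq_inner_right, hρv, one_pow]
  have hsum : 2 + 2 * (m * (r * h₁)) ≤ ∑ i, lam i :=
    calc 2 + 2 * (m * (r * h₁))
        = ∑ i, (2 * (r * h₁) + 2 * (1 - r * h₁) * ⟪b i, ρv⟫ ^ 2) := by
          rw [Finset.sum_add_distrib, Finset.sum_const, ← Finset.mul_sum, hparseval]
          simp only [Finset.card_univ, Fintype.card_fin, nsmul_eq_mul]
          push_cast
          ring
      _ ≤ ∑ i, lam i := Finset.sum_le_sum fun i _ =>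
          le_eigenvalue_of_radial_add_smul_map hρv hAsym hAρ hr.le hA_lb (b.norm_eq_one i) (hb i)
  have hlast : lam (Fin.last m) ≤ 2 * (r * h₂) :=
    eigenvalue_le_of_radial_add_smul_map hρv hAsym hAρ hr.le hrh₂ hA_ub
      (b.norm_eq_one _) (hb _)
  nlinarith [mul_le_mul_of_nonneg_left hlast (by linarith : (0 : ℝ) ≤ p)]

/-- pointwise eigenvalue estimate.  At a point of an (m+1)-dimensional
manifold with a pole, `ρv` is the radial unit vector `∂/∂r`, `A` is the self-adjoint
operator representing `Hess(r)` (vanishing radially, with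
`h₁(r)[g - dr⊗dr] ≤ Hess(r) ≤ h₂(r)[g - dr⊗dr]` and `r·h₂(r) ≥ 1`), and
`lam 0 ≤ … ≤ lam m` are the eigenvalues of `Hess(r²) = 2 dr⊗dr + 2r Hess(r)`
(eigenbasis `b`).  Then `Σᵢ λᵢ − p·λ_max ≥ 2(1 + (dim−1)·r·h₁ − p·r·h₂)`. -/
theorem hessian_eigenvalue_estimate {E : Type*} [NormedAddCommGroup E]
    [InnerProductSpace ℝ E] {m : ℕ}
    (p r h₁ h₂ : ℝ) (hp : 1 ≤ p) (hr : 0 < r)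
    (hh₁ : 0 < h₁) (hh₂ : 0 < h₂) (hrh₂ : 1 ≤ r * h₂)
    (ρv : E) (hρv : ‖ρv‖ = 1)
    (A : E →ₗ[ℝ] E) (hAsym : ∀ v w, ⟪A v, w⟫ = ⟪v, A w⟫) (hAρ : A ρv = 0)
    (hA_lb : ∀ v, ⟪v, ρv⟫ = 0 → h₁ * ‖v‖ ^ 2 ≤ ⟪A v, v⟫)
    (hA_ub : ∀ v, ⟪v, ρv⟫ = 0 → ⟪A v, v⟫ ≤ h₂ * ‖v‖ ^ 2)
    (lam : Fin (m + 1) → ℝ) (hmono : Monotone lam)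
    (b : OrthonormalBasis (Fin (m + 1)) ℝ E)
    (hb : ∀ i, (2 * ⟪b i, ρv⟫) • ρv + (2 * r) • A (b i) = lam i • b i) :
    2 * (1 + (m : ℝ) * (r * h₁) - p * (r * h₂)) ≤ (∑ i, lam i) - p * lam (Fin.last m) :=
  hessian_eigenvalue_estimate_general p r h₁ h₂ hp hr hrh₂ ρv hρv A hAsym hAρ hA_lb hA_ub lam b hb
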